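/- arXiv:math/0311448 — 5 statements merged into one kernel-verified Lean document; each statement's English description precedes it below -/
import Mathlib

section
/- For every x ∈ (0, 1), x·log((1+x)/(1-x)) - log(1-x²) ≤ x²·(18 - 11x²)/(6·(1 - x²)). -/
/-!
Both logarithms are power series in `x²`: `log ((1 + x) / (1 - x)) = x ∑ 2 x^{2k} / (2k + 1)` and
`-log (1 - x²) = x² ∑ x^{2k} / (k + 1)`. Keeping the leading term of each and bounding every later
coefficient by the largest one (`2/3`, resp. `1/2`) dominates both by geometric series; the two
bounds add up to `3x² + (7/6) x⁴ / (1 - x²)`, which is the right-hand side.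
-/

open Real Set

theorem le_of_hasSum_pow_of_coeff_succ_le {c : ℕ → ℝ} {C y s : ℝ} (hy0 : 0 ≤ y) (hy1 : y < 1)
    (hc : ∀ n, c (n + 1) ≤ C) (hs : HasSum (fun n ↦ c n * y ^ n) s) :
    s ≤ c 0 + C * y / (1 - y) := by
  have htail : HasSum (fun n ↦ c (n + 1) * y ^ (n + 1)) (s - c 0) := by
    simpa using (hasSum_nat_add_iff' 1).2 hs
  have hgeom := (hasSum_geometric_of_lt_one hy0 hy1).mul_left (C * y)
  simp only [mul_assoc, ← pow_succ'] at hgeom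
  have := hasSum_le (fun n ↦ mul_le_mul_of_nonneg_right (hc n) (pow_nonneg hy0 _)) htail hgeom
  rw [mul_div_assoc, div_eq_mul_inv]
  linarith

theorem log_one_add_div_one_sub_le {x : ℝ} (hx0 : 0 < x) (hx1 : x < 1) :
    log ((1 + x) / (1 - x)) ≤ x * (2 + 2 / 3 * x ^ 2 / (1 - x ^ 2)) := by
  have hs := (hasSum_log_sub_log_of_abs_lt_one (abs_lt.2 ⟨by linarith, hx1⟩)).div_const x
  rw [← log_div (by linarith) (by linarith)] at hs
  have hterm (k : ℕ) :
      2 * (1 / (2 * (k : ℝ) + 1)) * x ^ (2 * k + 1) / x = 2 / (2 * k + 1) * (x ^ 2) ^ k := by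
    rw [pow_succ, pow_mul]
    field_simp
  simp only [hterm] at hs
  have hc (k : ℕ) : (2 : ℝ) / (2 * (k + 1 : ℕ) + 1) ≤ 2 / 3 := by
    gcongr; push_cast; linarith [k.cast_nonneg (α := ℝ)]
  have := le_of_hasSum_pow_of_coeff_succ_le (by positivity) (by nlinarith) hc hs
  simpa [mul_comm] using (div_le_iff₀ hx0).1 this

theorem neg_log_one_sub_le {y : ℝ} (hy0 : 0 < y) (hy1 : y < 1) :
    -log (1 - y) ≤ y * (1 + 1 / 2 * y / (1 - y)) := by
  have hs := (hasSum_pow_div_log_of_abs_lt_one (abs_lt.2 ⟨by linarith, hy1⟩)).div_const y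
  have hterm (n : ℕ) : y ^ (n + 1) / (n + 1) / y = 1 / (n + 1) * y ^ n := by
    rw [pow_succ]
    field_simp
  simp only [hterm] at hs
  have hc (n : ℕ) : (1 : ℝ) / ((n + 1 : ℕ) + 1) ≤ 1 / 2 := by
    gcongr; push_cast; linarith [n.cast_nonneg (α := ℝ)]
  have := le_of_hasSum_pow_of_coeff_succ_le hy0.le hy1 hc hs
  simpa [mul_comm] using (div_le_iff₀ hy0).1 this

/-- For every x ∈ (0, 1),
x·log((1+x)/(1-x)) - log(1-x²) ≤ x²·(18 - 11x²)/(6·(1 - x²)). -/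
theorem stmt_4 :
    ∀ x ∈ Ioo (0 : ℝ) 1,
      x * Real.log ((1 + x) / (1 - x)) - Real.log (1 - x ^ 2)
        ≤ x ^ 2 * (18 - 11 * x ^ 2) / (6 * (1 - x ^ 2)) := by
  rintro x ⟨hx0, hx1⟩
  have hx2 : x ^ 2 < 1 := by nlinarith
  have hx2' : 1 - x ^ 2 ≠ 0 := by linarith
  calc x * log ((1 + x) / (1 - x)) - log (1 - x ^ 2)
      ≤ x * (x * (2 + 2 / 3 * x ^ 2 / (1 - x ^ 2))) + x ^ 2 * (1 + 1 / 2 * x ^ 2 / (1 - x ^ 2)) := by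
        linarith [mul_le_mul_of_nonneg_left (log_one_add_div_one_sub_le hx0 hx1) hx0.le,
          neg_log_one_sub_le (by positivity) hx2]
    _ = x ^ 2 * (18 - 11 * x ^ 2) / (6 * (1 - x ^ 2)) := by
        field_simp
        ring
end

section
/- Let k > 0, c ∈ (-k, 0), and suppose x := -c/k ∈ (0,1) satisfies x·log((1+x)/(1-x)) - log(1-x²) ≥ π/(2k). Then 11x⁴ - (18 + 3π/k)x² + 3π/k ≤ 0, and consequently c² ≥ (1/22)·(18k² + 3πk - √((18k² + 3πk)² - 132πk³)). -/
/-!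
Write `g(x) = x²(18 - 11x²)/(6(1 - x²)) - (x log((1+x)/(1-x)) - log(1 - x²))`. Then `g(0) = g'(0) = 0`
and `g''(x) = x⁴(39 - 11x²)/(3(1 - x²)³) ≥ 0` on `[0, 1)`, so `g ≥ 0` there. Combined with the
hypothesis this gives `π/(2k) ≤ x²(18 - 11x²)/(6(1 - x²))`, a quadratic inequality in `x²`;
multiplying by `k⁴` makes it a quadratic inequality in `c² = k²x²`, so `c²` is at least the
smaller root.
-/

open Real Set

/-- The `g` above, with its logarithms split into `log (1 ± x)`. -/
noncomputable def logBoundGap (x : ℝ) : ℝ :=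
  (18 * x ^ 2 - 11 * x ^ 4) / (6 * (1 - x ^ 2)) + (1 - x) * log (1 + x) + (1 + x) * log (1 - x)

noncomputable def logBoundGapDeriv (x : ℝ) : ℝ :=
  x * (18 - 22 * x ^ 2 + 11 * x ^ 4) / (3 * (1 - x ^ 2) ^ 2) - 4 * x / (1 - x ^ 2)
    - log (1 + x) + log (1 - x)

lemma le_of_hasDerivAt_nonneg_Ico {f f' : ℝ → ℝ} {a b x : ℝ}
    (hf : ∀ y ∈ Ico a b, HasDerivAt f (f' y) y) (hf' : ∀ y ∈ Ioo a b, 0 ≤ f' y)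
    (hx : x ∈ Ico a b) : f a ≤ f x := by
  have hab : a < b := hx.1.trans_lt hx.2
  refine monotoneOn_of_hasDerivWithinAt_nonneg (convex_Ico a b)
    (fun y hy ↦ (hf y hy).continuousAt.continuousWithinAt)
    (fun y hy ↦ (hf y (interior_subset hy)).hasDerivWithinAt) ?_ (left_mem_Ico.2 hab) hx hx.1
  rw [interior_Ico]
  exact hf'

lemma hasDerivAt_logBoundGap {x : ℝ} (h₀ : -1 < x) (h₁ : x < 1) :
    HasDerivAt logBoundGap (logBoundGapDeriv x) x := by
  have hp : (0 : ℝ) < 1 + x := by linarith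
  have hm : (0 : ℝ) < 1 - x := by linarith
  have hsq : (1 : ℝ) - x ^ 2 ≠ 0 := by nlinarith
  have hplus : HasDerivAt (fun y : ℝ ↦ 1 + y) 1 x := (hasDerivAt_id x).const_add 1
  have hminus : HasDerivAt (fun y : ℝ ↦ 1 - y) (-1) x := (hasDerivAt_id x).const_sub 1
  have hnum : HasDerivAt (fun y : ℝ ↦ 18 * y ^ 2 - 11 * y ^ 4) _ x :=
    ((hasDerivAt_pow 2 x).const_mul 18).sub ((hasDerivAt_pow 4 x).const_mul 11)
  have hden : HasDerivAt (fun y : ℝ ↦ 6 * (1 - y ^ 2)) _ x :=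
    ((hasDerivAt_pow 2 x).const_sub 1).const_mul 6
  have hrat := hnum.div hden (mul_ne_zero (by norm_num) hsq)
  refine ((hrat.add (hminus.mul (hplus.log hp.ne'))).add
    (hplus.mul (hminus.log hm.ne'))).congr_deriv ?_
  unfold logBoundGapDeriv
  field_simp
  ring

lemma hasDerivAt_logBoundGapDeriv {x : ℝ} (h₀ : -1 < x) (h₁ : x < 1) :
    HasDerivAt logBoundGapDeriv (x ^ 4 * (39 - 11 * x ^ 2) / (3 * (1 - x ^ 2) ^ 3)) x := by
  have hp : (0 : ℝ) < 1 + x := by linarith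
  have hm : (0 : ℝ) < 1 - x := by linarith
  have hsq : (1 : ℝ) - x ^ 2 ≠ 0 := by nlinarith
  have hplus : HasDerivAt (fun y : ℝ ↦ 1 + y) 1 x := (hasDerivAt_id x).const_add 1
  have hminus : HasDerivAt (fun y : ℝ ↦ 1 - y) (-1) x := (hasDerivAt_id x).const_sub 1
  have hsub : HasDerivAt (fun y : ℝ ↦ 1 - y ^ 2) _ x := (hasDerivAt_pow 2 x).const_sub 1
  have hnum : HasDerivAt (fun y : ℝ ↦ y * (18 - 22 * y ^ 2 + 11 * y ^ 4)) _ x :=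
    (hasDerivAt_id' x).mul ((((hasDerivAt_pow 2 x).const_mul 22).const_sub 18).add
      ((hasDerivAt_pow 4 x).const_mul 11))
  have hden : HasDerivAt (fun y : ℝ ↦ 3 * (1 - y ^ 2) ^ 2) _ x := (hsub.pow 2).const_mul 3
  have hrat := hnum.div hden (by positivity)
  have hfrac := ((hasDerivAt_id' x).const_mul 4).div hsub hsq
  refine (((hrat.sub hfrac).sub (hplus.log hp.ne')).add (hminus.log hm.ne')).congr_deriv ?_
  field_simp
  ring

lemma logBoundGapDeriv_nonneg {x : ℝ} (hx : x ∈ Ico 0 1) : 0 ≤ logBoundGapDeriv x := by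
  have h := le_of_hasDerivAt_nonneg_Ico
    (fun y hy ↦ hasDerivAt_logBoundGapDeriv (by linarith [hy.1]) hy.2) (fun y hy ↦ ?_) hx
  · simpa [logBoundGapDeriv] using h
  have : (0 : ℝ) < 1 - y ^ 2 := by nlinarith [hy.1, hy.2]
  have : (0 : ℝ) < 39 - 11 * y ^ 2 := by nlinarith [hy.2]
  positivity

lemma logBoundGap_nonneg {x : ℝ} (hx : x ∈ Ico 0 1) : 0 ≤ logBoundGap x := by
  have h := le_of_hasDerivAt_nonneg_Ico
    (fun y hy ↦ hasDerivAt_logBoundGap (by linarith [hy.1]) hy.2)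
    (fun y hy ↦ logBoundGapDeriv_nonneg (Ioo_subset_Ico_self hy)) hx
  simpa [logBoundGap] using h

theorem mul_log_div_sub_log_one_sub_sq_le {x : ℝ} (h₀ : 0 ≤ x) (h₁ : x < 1) :
    x * log ((1 + x) / (1 - x)) - log (1 - x ^ 2) ≤
      (18 * x ^ 2 - 11 * x ^ 4) / (6 * (1 - x ^ 2)) := by
  have hp : (1 + x) ≠ 0 := by linarith
  have hm : (1 - x) ≠ 0 := by linarith
  have hg := logBoundGap_nonneg ⟨h₀, h₁⟩
  rw [logBoundGap] at hg
  have hlog : log (1 - x ^ 2) = log (1 + x) + log (1 - x) := by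
    rw [show 1 - x ^ 2 = (1 + x) * (1 - x) by ring, log_mul hp hm]
  rw [log_div hp hm, hlog]
  linarith

theorem div_sub_sqrt_discrim_le_of_quadratic_nonpos {a b c t : ℝ} (ha : 0 < a)
    (h : a * t ^ 2 - b * t + c ≤ 0) : (b - √(b ^ 2 - 4 * a * c)) / (2 * a) ≤ t := by
  have hsq : (b - 2 * a * t) ^ 2 ≤ b ^ 2 - 4 * a * c := by nlinarith
  have hroot : b - 2 * a * t ≤ √(b ^ 2 - 4 * a * c) :=
    (le_abs_self _).trans (sqrt_sq_eq_abs (b - 2 * a * t) ▸ sqrt_le_sqrt hsq)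
  rw [div_le_iff₀ (by positivity)]
  linarith

/-- Let k > 0, c ∈ (-k, 0), and suppose x := -c/k ∈ (0,1) satisfies
x·log((1+x)/(1-x)) - log(1-x²) ≥ π/(2k). Then 11x⁴ - (18 + 3π/k)x² + 3π/k ≤ 0,
and consequently c² ≥ (1/22)·(18k² + 3πk - √((18k² + 3πk)² - 132πk³)). -/
theorem stmt_6 (k c : ℝ) (hk : 0 < k) (hc₁ : -k < c) (hc₂ : c < 0)
    (x : ℝ) (hx : x = -c / k)
    (h : x * Real.log ((1 + x) / (1 - x)) - Real.log (1 - x ^ 2) ≥ π / (2 * k)) :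
    11 * x ^ 4 - (18 + 3 * π / k) * x ^ 2 + 3 * π / k ≤ 0 ∧
    c ^ 2 ≥ (1 / 22) * (18 * k ^ 2 + 3 * π * k
      - Real.sqrt ((18 * k ^ 2 + 3 * π * k) ^ 2 - 132 * π * k ^ 3)) := by
  have hx₀ : 0 < x := hx ▸ div_pos (neg_pos.2 hc₂) hk
  have hx₁ : x < 1 := by rw [hx, div_lt_one hk]; linarith
  have hbound : π / (2 * k) ≤ (18 * x ^ 2 - 11 * x ^ 4) / (6 * (1 - x ^ 2)) :=
    h.le.trans (mul_log_div_sub_log_one_sub_sq_le hx₀.le hx₁)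
  rw [div_le_div_iff₀ (by positivity) (by nlinarith)] at hbound
  have hquad : 11 * k * x ^ 4 - (18 * k + 3 * π) * x ^ 2 + 3 * π ≤ 0 := by nlinarith
  have hquad_c : 11 * (c ^ 2) ^ 2 - (18 * k ^ 2 + 3 * π * k) * c ^ 2 + 3 * π * k ^ 3 ≤ 0 := by
    have hc : c = -(k * x) := by rw [hx]; field_simp
    have : 11 * (c ^ 2) ^ 2 - (18 * k ^ 2 + 3 * π * k) * c ^ 2 + 3 * π * k ^ 3
        = k ^ 3 * (11 * k * x ^ 4 - (18 * k + 3 * π) * x ^ 2 + 3 * π) := by rw [hc]; ring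
    rw [this]
    exact mul_nonpos_of_nonneg_of_nonpos (by positivity) hquad
  constructor
  · rw [show 11 * x ^ 4 - (18 + 3 * π / k) * x ^ 2 + 3 * π / k
        = (11 * k * x ^ 4 - (18 * k + 3 * π) * x ^ 2 + 3 * π) / k by field_simp]
    exact div_nonpos_of_nonpos_of_nonneg hquad hk.le
  · have := div_sub_sqrt_discrim_le_of_quadratic_nonpos (by norm_num : (0 : ℝ) < 11) hquad_c
    rw [show 4 * 11 * (3 * π * k ^ 3) = 132 * π * k ^ 3 by ring] at this
    linarith
end

section
/- Uniqueness of the solution converging to the unstable limit: Let k > 0, c ∈ (-k, 0), α ∈ {-1, 1}, with θ₋(c) ∈ (0, π/4) satisfying sin(2θ₋(c)) = -c/k. If θ₁ ≤ θ₂ are two solutions of ρ·θ' = c + (k + α/ρ)·sin(2θ) on (ρ₀, ∞) both tending to θ₋(c) as ρ → ∞, then θ₁ = θ₂. -/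
/-!
For large `ρ` the coefficient `k + α / ρ` is nonnegative and both solutions lie in
`[-π/4, π/4]`, where `θ ↦ sin (2θ)` is increasing. Hence the right-hand side is monotone in `θ`
there, so `θ₂ - θ₁ ≥ 0` is nondecreasing for large `ρ`; since it tends to `0`, it vanishes at some
point, and uniqueness for the (Lipschitz) backward initial value problem gives `θ₁ = θ₂`.
-/

open Real Set Filter Topology
open scoped NNReal

noncomputable def pruferRHS (k c α ρ θ : ℝ) : ℝ :=
  (c + (k + α / ρ) * sin (2 * θ)) / ρ

theorem ODE_solution_unique_of_mem_Ioi {E : Type*} [NormedAddCommGroup E] [NormedSpace ℝ E]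
    {v : ℝ → E → E} {K : ℝ≥0} {f g : ℝ → E} {a t₀ : ℝ}
    (hv : ∀ t ∈ Ioi a, LipschitzWith K (v t)) (ht₀ : t₀ ∈ Ioi a)
    (hf : ∀ t ∈ Ioi a, HasDerivAt f (v t (f t)) t)
    (hg : ∀ t ∈ Ioi a, HasDerivAt g (v t (g t)) t)
    (heq : f t₀ = g t₀) : EqOn f g (Ioi a) := by
  intro t ht
  have hsub : Ioo a (max t t₀ + 1) ⊆ Ioi a := Ioo_subset_Ioi_self
  exact ODE_solution_unique_of_mem_Ioo (s := fun _ ↦ univ)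
    (fun t' ht' ↦ (hv t' (hsub ht')).lipschitzOnWith) ⟨ht₀, by grind⟩
    (fun t' ht' ↦ ⟨hf t' (hsub ht'), trivial⟩) (fun t' ht' ↦ ⟨hg t' (hsub ht'), trivial⟩) heq
    ⟨ht, by grind⟩

theorem monotoneOn_sub_of_hasDerivAt_le {f g f' g' : ℝ → ℝ} {R : ℝ}
    (hf : ∀ t ∈ Ici R, HasDerivAt f (f' t) t) (hg : ∀ t ∈ Ici R, HasDerivAt g (g' t) t)
    (hle : ∀ t ∈ Ici R, f' t ≤ g' t) : MonotoneOn (g - f) (Ici R) :=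
  monotoneOn_of_hasDerivWithinAt_nonneg (convex_Ici R)
    (fun t ht ↦ ((hg t ht).sub (hf t ht)).continuousAt.continuousWithinAt)
    (fun t ht ↦ ((hg t (interior_subset ht)).sub (hf t (interior_subset ht))).hasDerivWithinAt)
    (fun t ht ↦ sub_nonneg.2 (hle t (interior_subset ht)))

theorem MonotoneOn.le_of_tendsto_atTop {f : ℝ → ℝ} {R l : ℝ} (hf : MonotoneOn f (Ici R))
    (hlim : Tendsto f atTop (𝓝 l)) {x : ℝ} (hx : x ∈ Ici R) : f x ≤ l :=
  ge_of_tendsto hlim <| (eventually_ge_atTop x).mono fun _ hy ↦ hf hx (le_trans hx hy) hy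

section Prufer

variable {k c α : ℝ}

theorem lipschitzWith_pruferRHS {ρ₀ t : ℝ} (hρ₀ : 0 < ρ₀) (ht : ρ₀ ≤ t) :
    LipschitzWith (2 * (|k| + |α| / ρ₀) / ρ₀).toNNReal (pruferRHS k c α t) := by
  have ht₀ : 0 < t := hρ₀.trans_le ht
  have hcoeff : |k + α / t| ≤ |k| + |α| / ρ₀ := calc
    |k + α / t| ≤ |k| + |α| / t := by
      simpa only [abs_div, abs_of_pos ht₀] using abs_add_le k (α / t)
    _ ≤ |k| + |α| / ρ₀ := by gcongr
  refine LipschitzWith.of_dist_le' fun x y ↦ ?_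
  rw [Real.dist_eq, Real.dist_eq]
  calc |pruferRHS k c α t x - pruferRHS k c α t y|
      = |k + α / t| * |sin (2 * x) - sin (2 * y)| / t := by
        rw [pruferRHS, pruferRHS, ← sub_div, abs_div, abs_of_pos ht₀, ← abs_mul]
        congr 2
        ring
    _ ≤ (|k| + |α| / ρ₀) * (2 * |x - y|) / ρ₀ := by
        gcongr
        calc |sin (2 * x) - sin (2 * y)| ≤ |2 * x - 2 * y| := abs_sin_sub_sin_le _ _
          _ = 2 * |x - y| := by rw [← mul_sub, abs_mul, abs_two]
    _ = 2 * (|k| + |α| / ρ₀) / ρ₀ * |x - y| := by ring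

theorem pruferRHS_le_pruferRHS {t x y : ℝ} (ht : 0 < t) (hcoeff : 0 ≤ k + α / t)
    (hx : x ∈ Icc (-(π / 4)) (π / 4)) (hy : y ∈ Icc (-(π / 4)) (π / 4)) (hxy : x ≤ y) :
    pruferRHS k c α t x ≤ pruferRHS k c α t y := by
  have hsin : sin (2 * x) ≤ sin (2 * y) :=
    sin_le_sin_of_le_of_le_pi_div_two (by linarith [hx.1]) (by linarith [hy.2]) (by linarith)
  unfold pruferRHS
  gcongr

theorem eventually_atTop_nonneg_add_div (hk : 0 < k) : ∀ᶠ t in atTop, 0 ≤ k + α / t := by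
  have hlim : Tendsto (fun t ↦ k + α / t) atTop (𝓝 k) := by
    simpa using
      tendsto_const_nhds.add (tendsto_const_nhds.div_atTop (tendsto_id (x := (atTop : Filter ℝ))))
  exact (hlim.eventually (lt_mem_nhds hk)).mono fun _ h ↦ le_of_lt h

end Prufer

theorem stmt_9_general (k c α ρ₀ : ℝ) (hk : 0 < k)
    (hρ₀ : 0 < ρ₀)
    (θm : ℝ) (hθm : θm ∈ Ioo 0 (π / 4))
    (θ₁ θ₂ : ℝ → ℝ)
    (hsol₁ : ∀ ρ ∈ Ioi ρ₀, HasDerivAt θ₁ ((c + (k + α / ρ) * Real.sin (2 * θ₁ ρ)) / ρ) ρ)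
    (hsol₂ : ∀ ρ ∈ Ioi ρ₀, HasDerivAt θ₂ ((c + (k + α / ρ) * Real.sin (2 * θ₂ ρ)) / ρ) ρ)
    (hle : ∀ ρ ∈ Ioi ρ₀, θ₁ ρ ≤ θ₂ ρ)
    (hlim₁ : Tendsto θ₁ atTop (nhds θm))
    (hlim₂ : Tendsto θ₂ atTop (nhds θm)) :
    ∀ ρ ∈ Ioi ρ₀, θ₁ ρ = θ₂ ρ := by
  have hwindow : Icc (-(π / 4)) (π / 4) ∈ 𝓝 θm :=
    Icc_mem_nhds (by linarith [hθm.1, Real.pi_pos]) hθm.2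
  obtain ⟨R, hR⟩ := eventually_atTop.1 <| (eventually_gt_atTop ρ₀).and <|
    (eventually_atTop_nonneg_add_div (α := α) hk).and <|
    (hlim₁.eventually_mem hwindow).and (hlim₂.eventually_mem hwindow)
  have hmono : MonotoneOn (θ₂ - θ₁) (Ici R) :=
    monotoneOn_sub_of_hasDerivAt_le (fun t ht ↦ hsol₁ t (hR t ht).1)
      (fun t ht ↦ hsol₂ t (hR t ht).1) fun t ht ↦
        have ⟨htρ₀, hcoeff, hwin₁, hwin₂⟩ := hR t ht
        pruferRHS_le_pruferRHS (hρ₀.trans htρ₀) hcoeff hwin₁ hwin₂ (hle t htρ₀)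
  have hdiff_le : θ₂ R - θ₁ R ≤ 0 :=
    hmono.le_of_tendsto_atTop (sub_self θm ▸ hlim₂.sub hlim₁) (le_refl R)
  have heqR : θ₁ R = θ₂ R := by linarith [hle R (hR R le_rfl).1]
  exact ODE_solution_unique_of_mem_Ioi (fun t ht ↦ lipschitzWith_pruferRHS hρ₀ (le_of_lt ht))
    (hR R le_rfl).1 hsol₁ hsol₂ heqR

/-- Uniqueness of the solution converging to the unstable limit: two ordered
solutions of ρ·θ' = c + (k + α/ρ)·sin(2θ) on (ρ₀, ∞), both tending to
θ₋(c) ∈ (0, π/4) with sin(2θ₋(c)) = -c/k as ρ → ∞, coincide. -/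
theorem stmt_9 (k c α ρ₀ : ℝ) (hk : 0 < k) (hc₁ : -k < c) (hc₂ : c < 0)
    (hα : α = -1 ∨ α = 1) (hρ₀ : 0 < ρ₀)
    (θm : ℝ) (hθm : θm ∈ Ioo 0 (π / 4)) (hsin : Real.sin (2 * θm) = -c / k)
    (θ₁ θ₂ : ℝ → ℝ)
    (hsol₁ : ∀ ρ ∈ Ioi ρ₀, HasDerivAt θ₁ ((c + (k + α / ρ) * Real.sin (2 * θ₁ ρ)) / ρ) ρ)
    (hsol₂ : ∀ ρ ∈ Ioi ρ₀, HasDerivAt θ₂ ((c + (k + α / ρ) * Real.sin (2 * θ₂ ρ)) / ρ) ρ)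
    (hle : ∀ ρ ∈ Ioi ρ₀, θ₁ ρ ≤ θ₂ ρ)
    (hlim₁ : Tendsto θ₁ atTop (nhds θm))
    (hlim₂ : Tendsto θ₂ atTop (nhds θm)) :
    ∀ ρ ∈ Ioi ρ₀, θ₁ ρ = θ₂ ρ :=
  stmt_9_general k c α ρ₀ hk hρ₀ θm hθm θ₁ θ₂ hsol₁ hsol₂ hle hlim₁ hlim₂
end

section
/- Suppose u : (0, r₀] → ℝ is positive and differentiable with (log u)'(r) ∼ |a|/r² as r → 0⁺, for some a ≠ 0. Then ∫₀^{r₀} u²(r) dr < ∞. -/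
open Real Set Filter MeasureTheory

/-- If u > 0 on (0, r₀] is differentiable with (log u)'(r) ∼ |a|/r² as r → 0⁺
for some a ≠ 0, then ∫₀^{r₀} u² < ∞. -/
theorem stmt_15 (r₀ a : ℝ) (hr₀ : 0 < r₀) (ha : a ≠ 0)
    (u g : ℝ → ℝ) (hu : ∀ r ∈ Ioc (0 : ℝ) r₀, 0 < u r)
    (hder : ∀ r ∈ Ioc (0 : ℝ) r₀, HasDerivAt (fun t => Real.log (u t)) (g r) r)
    (hasymp : Tendsto (fun r => g r * r ^ 2) (nhdsWithin 0 (Ioi 0)) (nhds |a|)) :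
    IntegrableOn (fun r => u r ^ 2) (Ioc 0 r₀) := by
  -- g r * r ^ 2 > 0 eventually near 0⁺
  have habs : (0 : ℝ) < |a| := abs_pos.mpr ha
  have hev : ∀ᶠ r in nhdsWithin 0 (Ioi 0), 0 < g r * r ^ 2 :=
    hasymp.eventually (eventually_gt_nhds habs)
  rw [eventually_nhdsWithin_iff, Metric.eventually_nhds_iff] at hev
  obtain ⟨ε, hε, hεg⟩ := hev
  set δ : ℝ := min (ε / 2) r₀ with hδdef
  have hδpos : 0 < δ := lt_min (by linarith) hr₀
  have hδr₀ : δ ≤ r₀ := min_le_right _ _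
  have hδε : δ < ε := lt_of_le_of_lt (min_le_left _ _) (by linarith)
  -- g is positive on (0, δ]
  have hgpos : ∀ r ∈ Ioc (0 : ℝ) δ, 0 < g r := by
    intro r hr
    have hlt : dist r 0 < ε := by
      rw [Real.dist_eq, sub_zero, abs_of_pos hr.1]
      exact lt_of_le_of_lt hr.2 hδε
    have := hεg hlt hr.1
    have hr2 : (0 : ℝ) < r ^ 2 := pow_pos hr.1 2
    nlinarith
  -- u is continuous on Ioc 0 r₀
  have hucont : ContinuousOn u (Ioc 0 r₀) := by
    intro r hr
    have h1 : ContinuousAt (fun t => Real.log (u t)) r := (hder r hr).continuousAt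
    have h2 : ContinuousWithinAt (fun t => Real.exp (Real.log (u t))) (Ioc 0 r₀) r :=
      (Real.continuous_exp.continuousAt.comp h1).continuousWithinAt
    refine h2.congr (fun t ht => ?_) ?_
    · exact (Real.exp_log (hu t ht)).symm
    · exact (Real.exp_log (hu r hr)).symm
  -- u r ≤ u δ for r ∈ (0, δ]
  have hmono : ∀ r ∈ Ioc (0 : ℝ) δ, u r ≤ u δ := by
    intro r hr
    rcases eq_or_lt_of_le hr.2 with h | h
    · rw [h]
    · have hsub : Icc r δ ⊆ Ioc 0 r₀ := fun t ht =>
        ⟨lt_of_lt_of_le hr.1 ht.1, le_trans ht.2 hδr₀⟩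
      have hcont : ContinuousOn (fun t => Real.log (u t)) (Icc r δ) := fun t ht =>
        ((hder t (hsub ht)).continuousAt).continuousWithinAt
      have hderiv : ∀ x ∈ Ioo r δ, HasDerivAt (fun t => Real.log (u t)) (g x) x :=
        fun x hx => hder x (hsub ⟨le_of_lt hx.1, le_of_lt hx.2⟩)
      obtain ⟨c, hc, hceq⟩ := exists_hasDerivAt_eq_slope (fun t => Real.log (u t)) g h
        hcont hderiv
      have hgc : 0 < g c := hgpos c ⟨lt_trans hr.1 hc.1, le_of_lt hc.2⟩
      have hslope : 0 < (Real.log (u δ) - Real.log (u r)) / (δ - r) := hceq ▸ hgc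
      have hlog : Real.log (u r) ≤ Real.log (u δ) := by
        have hd : 0 < δ - r := by linarith
        nlinarith [mul_pos hslope hd, div_mul_cancel₀
          (Real.log (u δ) - Real.log (u r)) (ne_of_gt hd)]
      exact (Real.log_le_log_iff (hu r ⟨hr.1, le_trans hr.2 hδr₀⟩)
        (hu δ ⟨hδpos, hδr₀⟩)).mp hlog
  -- bound on [δ, r₀]
  have hIccsub : Icc δ r₀ ⊆ Ioc 0 r₀ := fun t ht => ⟨lt_of_lt_of_le hδpos ht.1, ht.2⟩
  obtain ⟨x₀, hx₀mem, hx₀⟩ := (isCompact_Icc (a := δ) (b := r₀)).exists_isMaxOn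
    (nonempty_Icc.mpr hδr₀) (hucont.mono hIccsub)
  set M := u x₀ with hM
  have hbound : ∀ r ∈ Ioc (0 : ℝ) r₀, u r ≤ M := by
    intro r hr
    rcases le_or_gt r δ with h | h
    · exact le_trans (hmono r ⟨hr.1, h⟩) (hx₀ (left_mem_Icc.mpr hδr₀))
    · exact hx₀ ⟨le_of_lt h, hr.2⟩
  -- conclude integrability
  have hmeas : AEStronglyMeasurable (fun r => u r ^ 2) (volume.restrict (Ioc 0 r₀)) :=
    ((hucont.pow 2).aestronglyMeasurable measurableSet_Ioc)
  refine ⟨hmeas, HasFiniteIntegral.restrict_of_bounded (C := M ^ 2) measure_Ioc_lt_top ?_⟩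
  · rw [ae_restrict_iff' measurableSet_Ioc]
    filter_upwards with r hr
    have h1 := hu r hr
    have h2 := hbound r hr
    rw [Real.norm_eq_abs, abs_of_nonneg (by positivity)]
    nlinarith
end

section
/- Let k > 0, c ∈ (-k, 0), λ ∈ [-1,1], y₊ = (k+√(k²-c²))/(-c), and 0 < d < √(k²-c²)/(3|c|). Suppose R > 0 satisfies (3/d)·(|λ+1|·(y₊+d)² + |λ-1|)·R < √(k²-c²) and 6·|λ+1|·(y₊+d)·R < √(k²-c²). Then for all r ∈ (0, R] and y, z ∈ [y₊ - d, y₊ + d]: (c - (λ+1)r)·(y + z) + 2k ≤ -√(k² - c²). -/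
open Real Set

/-! Since `(λ + 1) r (y + z) ≥ 0`, the coefficient is at most `c (y + z) + 2k ≤ 2 (c (y₊ - d) + k)`.
The equilibrium `y₊` of the Riccati equation satisfies `c y₊ + k = -√(k² - c²)`, so this bound equals
`-2√(k² - c²) + 2|c| d`, and `|c| d < √(k² - c²) / 3` finishes. -/

lemma mul_div_neg_add_eq {c k s : ℝ} (hc : c ≠ 0) : c * ((k + s) / -c) + k = -s := by
  field_simp
  ring

lemma sub_mul_add_le_of_two_mul_le {c p w m k : ℝ} (hc : c ≤ 0) (hp : 0 ≤ p) (hm : 0 ≤ m)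
    (hw : 2 * m ≤ w) : (c - p) * w + 2 * k ≤ 2 * (c * m + k) := by
  nlinarith [mul_nonneg hp (hm.trans (by linarith : m ≤ w))]

theorem stmt_17_general (k c lam d R : ℝ) (hk : 0 < k) (hc₂ : c < 0)
    (hlam : lam ∈ Icc (-1 : ℝ) 1)
    (yplus : ℝ) (hy : yplus = (k + Real.sqrt (k ^ 2 - c ^ 2)) / (-c))
    (hd₀ : 0 < d) (hd₁ : d < Real.sqrt (k ^ 2 - c ^ 2) / (3 * |c|)) :
    ∀ r ∈ Ioc (0 : ℝ) R, ∀ y ∈ Icc (yplus - d) (yplus + d),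
      ∀ z ∈ Icc (yplus - d) (yplus + d),
        (c - (lam + 1) * r) * (y + z) + 2 * k ≤ -Real.sqrt (k ^ 2 - c ^ 2) := by
  rintro r ⟨hr, -⟩ y ⟨hy₁, -⟩ z ⟨hz₁, -⟩
  set s := Real.sqrt (k ^ 2 - c ^ 2)
  have hs : 0 ≤ s := Real.sqrt_nonneg _
  have hequil : c * yplus + k = -s := hy ▸ mul_div_neg_add_eq hc₂.ne
  have hcd : d * (3 * -c) < s := by
    rwa [abs_of_neg hc₂, lt_div_iff₀ (by linarith)] at hd₁
  -- `-c y₊ = k + s > 3 (-c) d`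
  have hd_le : d ≤ yplus := by nlinarith
  have hp : 0 ≤ (lam + 1) * r := mul_nonneg (by linarith [hlam.1]) hr.le
  have hbound := sub_mul_add_le_of_two_mul_le hc₂.le hp (sub_nonneg.mpr hd_le)
    (by linarith : 2 * (yplus - d) ≤ y + z) (k := k)
  linarith

/-- Coefficient estimate: under the smallness conditions on R, for all
r ∈ (0, R] and y, z ∈ [y₊ - d, y₊ + d] one has
(c - (λ+1)r)·(y + z) + 2k ≤ -√(k² - c²). -/
theorem stmt_17 (k c lam d R : ℝ) (hk : 0 < k) (hc₁ : -k < c) (hc₂ : c < 0)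
    (hlam : lam ∈ Icc (-1 : ℝ) 1)
    (yplus : ℝ) (hy : yplus = (k + Real.sqrt (k ^ 2 - c ^ 2)) / (-c))
    (hd₀ : 0 < d) (hd₁ : d < Real.sqrt (k ^ 2 - c ^ 2) / (3 * |c|))
    (hR₀ : 0 < R)
    (hR₁ : (3 / d) * (|lam + 1| * (yplus + d) ^ 2 + |lam - 1|) * R
      < Real.sqrt (k ^ 2 - c ^ 2))
    (hR₂ : 6 * |lam + 1| * (yplus + d) * R < Real.sqrt (k ^ 2 - c ^ 2)) :
    ∀ r ∈ Ioc (0 : ℝ) R, ∀ y ∈ Icc (yplus - d) (yplus + d),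
      ∀ z ∈ Icc (yplus - d) (yplus + d),
        (c - (lam + 1) * r) * (y + z) + 2 * k ≤ -Real.sqrt (k ^ 2 - c ^ 2) :=
  stmt_17_general k c lam d R hk hc₂ hlam yplus hy hd₀ hd₁
end
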